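/- arXiv:0805.3787 — 2 statements merged into one kernel-verified Lean document; each statement's English description precedes it below -/
import Mathlib

section
/- Let K be a monotone, subadditive abstract capacity on subsets of ℝᴺ with the scaling bound K(λ·A) ≤ c·K(A) for 1 ≤ λ ≤ 2. Fix α > 0 and define, for a closed set F and x ∈ ℝᴺ, a*_m(x) = K(2^m·(F ∩ closedBall(x, 2^{-m}))) and W*_F(x) = Σ_m 2^{αm} a*_m(x). Suppose y ∈ ∂(Fᶜ) and W*_F(y) = ∞. Then for any x ∉ F with 2^{-λ} ≤ |x−y| ≤ 2^{-λ+1} (λ ∈ ℤ) one has Σ_{m=1}^{λ} 2^{αm} a*_m(y) ≤ c' · W*_F(x) for a constant c' depending only on c and α; consequently W*_F(x) → ∞ as x → y with x ∉ F. -/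
open scoped ENNReal Pointwise
open Filter

/-- The ball piece `F*_m(x) = F ∩ closedBall(x, 2^{-m})`. -/
def ballPiece {N : ℕ} (F : Set (EuclideanSpace ℝ (Fin N)))
    (x : EuclideanSpace ℝ (Fin N)) (m : ℤ) : Set (EuclideanSpace ℝ (Fin N)) :=
  F ∩ Metric.closedBall x ((2 : ℝ) ^ (-m))

/-- `a*_m(x) = K(2^m · F*_m(x))`. -/
noncomputable def aStar {N : ℕ} (K : Set (EuclideanSpace ℝ (Fin N)) → ℝ≥0∞)
    (F : Set (EuclideanSpace ℝ (Fin N))) (x : EuclideanSpace ℝ (Fin N)) (m : ℤ) : ℝ≥0∞ :=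
  K (((2 : ℝ) ^ m) • ballPiece F x m)

/-- `W*_F(x) = Σ_m 2^{αm} a*_m(x)`. -/
noncomputable def WStar {N : ℕ} (K : Set (EuclideanSpace ℝ (Fin N)) → ℝ≥0∞) (α : ℝ)
    (F : Set (EuclideanSpace ℝ (Fin N))) (x : EuclideanSpace ℝ (Fin N)) : ℝ≥0∞ :=
  ∑' m : ℤ, (2 : ℝ≥0∞) ^ (α * (m : ℝ)) * aStar K F x m

/-! If `dist x y ≤ 2^{-m+1}` then `closedBall y 2^{-m} ⊆ closedBall x 2^{-m+2}`, so monotonicity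
and two applications of the scaling bound give `a*_m(y) ≤ c² a*_{m-2}(x)`, i.e.
`2^{αm} a*_m(y) ≤ c² 2^{2α} · 2^{α(m-2)} a*_{m-2}(x)`. Summing over any finite set of scales `m`
with `dist x y ≤ 2^{-m+1}` bounds a partial sum of `W*_F(y)` by `c² 2^{2α} W*_F(x)`. Since
`W*_F(y) = ∞` its partial sums are unbounded, and every finite set of scales is admissible once `x`
is close enough to `y`. -/

lemma Finset.sum_comp_sub_le_tsum {G : Type*} [AddGroup G] (t : G → ℝ≥0∞) (s : Finset G)
    (k : G) :
    ∑ m ∈ s, t (m - k) ≤ ∑' m, t m := by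
  simpa using ENNReal.sum_le_tsum (f := t) (s.map (Equiv.subRight k).toEmbedding)

lemma apply_zpow_add_two_smul_le {E : Type*} [MulAction ℝ E] {K : Set E → ℝ≥0∞} {c : ℝ≥0∞}
    (hscale : ∀ (A : Set E) (μ : ℝ), 1 ≤ μ → μ ≤ 2 → K (μ • A) ≤ c * K A) (A : Set E) (k : ℤ) :
    K ((2 : ℝ) ^ (k + 2) • A) ≤ c ^ 2 * K ((2 : ℝ) ^ k • A) := by
  have hsplit : (2 : ℝ) ^ (k + 2) • A = (2 : ℝ) • (2 : ℝ) • (2 : ℝ) ^ k • A := by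
    rw [smul_smul, smul_smul, zpow_add₀ two_ne_zero]
    norm_num [mul_comm]
  calc K ((2 : ℝ) ^ (k + 2) • A)
      ≤ c * K ((2 : ℝ) • (2 : ℝ) ^ k • A) := hsplit ▸ hscale _ 2 one_le_two le_rfl
    _ ≤ c * (c * K ((2 : ℝ) ^ k • A)) := by gcongr; exact hscale _ 2 one_le_two le_rfl
    _ = c ^ 2 * K ((2 : ℝ) ^ k • A) := by ring

lemma sq_mul_two_rpow_pos {c : ℝ≥0∞} {α : ℝ} (hc : 0 < c) : 0 < c ^ 2 * (2 : ℝ≥0∞) ^ (2 * α) :=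
  ENNReal.mul_pos (pow_ne_zero 2 hc.ne') (ENNReal.rpow_pos two_pos ENNReal.ofNat_ne_top).ne'

lemma sq_mul_two_rpow_ne_top {c : ℝ≥0∞} {α : ℝ} (hc : c ≠ ∞) :
    c ^ 2 * (2 : ℝ≥0∞) ^ (2 * α) ≠ ∞ :=
  ENNReal.mul_ne_top (ENNReal.pow_ne_top hc)
    (ENNReal.rpow_ne_top_of_ne_zero two_ne_zero ENNReal.ofNat_ne_top)

open Topology

section BallPieces

variable {N : ℕ} {K : Set (EuclideanSpace ℝ (Fin N)) → ℝ≥0∞} {c : ℝ≥0∞} {α : ℝ}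
  {F : Set (EuclideanSpace ℝ (Fin N))} {x y : EuclideanSpace ℝ (Fin N)} {m : ℤ}

lemma ballPiece_subset_sub_two (hxy : dist x y ≤ (2 : ℝ) ^ (-m + 1)) :
    ballPiece F y m ⊆ ballPiece F x (m - 2) := by
  refine Set.inter_subset_inter_right _ (Metric.closedBall_subset_closedBall' ?_)
  have h1 : (2 : ℝ) ^ (-m + 1) = 2 * 2 ^ (-m) := by
    rw [zpow_add₀ two_ne_zero, zpow_one, mul_comm]
  have h2 : (2 : ℝ) ^ (-(m - 2)) = 4 * 2 ^ (-m) := by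
    rw [show -(m - 2) = -m + 2 by ring, zpow_add₀ two_ne_zero]
    norm_num [mul_comm]
  have : (0 : ℝ) < 2 ^ (-m) := by positivity
  rw [h2, dist_comm]
  linarith

variable (hmono : Monotone K)
  (hscale : ∀ (A : Set (EuclideanSpace ℝ (Fin N))) (μ : ℝ), 1 ≤ μ → μ ≤ 2 →
    K (μ • A) ≤ c * K A)
include hmono hscale

lemma aStar_le_aStar_sub_two (hxy : dist x y ≤ (2 : ℝ) ^ (-m + 1)) :
    aStar K F y m ≤ c ^ 2 * aStar K F x (m - 2) :=
  calc aStar K F y m ≤ K ((2 : ℝ) ^ (m - 2 + 2) • ballPiece F x (m - 2)) := by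
        rw [sub_add_cancel]
        exact hmono (Set.smul_set_mono (ballPiece_subset_sub_two hxy))
    _ ≤ c ^ 2 * aStar K F x (m - 2) := apply_zpow_add_two_smul_le hscale _ _

lemma weighted_aStar_le_weighted_aStar_sub_two (hxy : dist x y ≤ (2 : ℝ) ^ (-m + 1)) :
    (2 : ℝ≥0∞) ^ (α * m) * aStar K F y m
      ≤ c ^ 2 * 2 ^ (2 * α) * ((2 : ℝ≥0∞) ^ (α * ((m - 2 : ℤ) : ℝ)) * aStar K F x (m - 2)) := by
  have hweight : (2 : ℝ≥0∞) ^ (α * m) = 2 ^ (2 * α) * 2 ^ (α * ((m - 2 : ℤ) : ℝ)) := by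
    rw [← ENNReal.rpow_add _ _ two_ne_zero ENNReal.ofNat_ne_top]
    push_cast
    ring_nf
  calc (2 : ℝ≥0∞) ^ (α * m) * aStar K F y m
      ≤ (2 : ℝ≥0∞) ^ (α * m) * (c ^ 2 * aStar K F x (m - 2)) := by
        gcongr; exact aStar_le_aStar_sub_two hmono hscale hxy
    _ = _ := by rw [hweight]; ring

lemma sum_weighted_aStar_le_mul_WStar (s : Finset ℤ)
    (hxy : ∀ m ∈ s, dist x y ≤ (2 : ℝ) ^ (-m + 1)) :
    ∑ m ∈ s, (2 : ℝ≥0∞) ^ (α * m) * aStar K F y m ≤ c ^ 2 * 2 ^ (2 * α) * WStar K α F x :=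
  calc ∑ m ∈ s, (2 : ℝ≥0∞) ^ (α * m) * aStar K F y m
      ≤ ∑ m ∈ s, c ^ 2 * 2 ^ (2 * α) *
          ((2 : ℝ≥0∞) ^ (α * ((m - 2 : ℤ) : ℝ)) * aStar K F x (m - 2)) :=
        Finset.sum_le_sum fun m hm ↦
          weighted_aStar_le_weighted_aStar_sub_two hmono hscale (hxy m hm)
    _ ≤ c ^ 2 * 2 ^ (2 * α) * WStar K α F x := by
        rw [← Finset.mul_sum]
        gcongr
        exact Finset.sum_comp_sub_le_tsum (fun m : ℤ ↦ (2 : ℝ≥0∞) ^ (α * m) * aStar K F x m) s 2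

lemma tendsto_WStar_nhds_top (hc : 0 < c) (hcfin : c ≠ ∞) (hWy : WStar K α F y = ∞) :
    Tendsto (WStar K α F) (𝓝 y) (𝓝 ∞) := by
  have hc' := (sq_mul_two_rpow_pos (α := α) hc).ne'
  have hc'fin := sq_mul_two_rpow_ne_top (α := α) hcfin
  refine ENNReal.tendsto_nhds_top fun n ↦ ?_
  have hlt : c ^ 2 * 2 ^ (2 * α) * n < WStar K α F y :=
    hWy ▸ ENNReal.mul_lt_top hc'fin.lt_top (by simp)
  rw [WStar, ENNReal.tsum_eq_iSup_sum] at hlt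
  obtain ⟨s, hs⟩ := lt_iSup_iff.mp hlt
  have hnear : ∀ᶠ x in 𝓝 y, ∀ m ∈ s, dist x y ≤ (2 : ℝ) ^ (-m + 1) :=
    (Finset.eventually_all s).2 fun m _ ↦ Metric.closedBall_mem_nhds y (by positivity)
  filter_upwards [hnear] with x hx
  exact (ENNReal.mul_lt_mul_iff_right hc' hc'fin).1
    (hs.trans_le (sum_weighted_aStar_le_mul_WStar hmono hscale s hx))

end BallPieces

theorem blowup_of_WStar_infinite_general (N : ℕ) (c : ℝ≥0∞) (α : ℝ)
    (hc : 0 < c) (hcfin : c ≠ ∞)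
    (K : Set (EuclideanSpace ℝ (Fin N)) → ℝ≥0∞)
    (hmono : Monotone K)
    (hscale : ∀ (A : Set (EuclideanSpace ℝ (Fin N))) (μ : ℝ), 1 ≤ μ → μ ≤ 2 →
      K ((μ • A : Set (EuclideanSpace ℝ (Fin N)))) ≤ c * K A)
    (F : Set (EuclideanSpace ℝ (Fin N)))
    (y : EuclideanSpace ℝ (Fin N))
    (hWy : WStar K α F y = ∞) :
    ∃ c' : ℝ≥0∞, 0 < c' ∧ c' ≠ ∞ ∧
      (∀ (x : EuclideanSpace ℝ (Fin N)), x ∉ F → ∀ l : ℤ,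
        (2 : ℝ) ^ (-l) ≤ dist x y → dist x y ≤ (2 : ℝ) ^ (-l + 1) →
        ∑ m ∈ Finset.Icc (1 : ℤ) l, (2 : ℝ≥0∞) ^ (α * (m : ℝ)) * aStar K F y m
          ≤ c' * WStar K α F x) ∧
      Tendsto (WStar K α F) (nhdsWithin y Fᶜ) (nhds ∞) := by
  refine ⟨c ^ 2 * 2 ^ (2 * α), sq_mul_two_rpow_pos hc, sq_mul_two_rpow_ne_top hcfin, ?_,
    (tendsto_WStar_nhds_top hmono hscale hc hcfin hWy).mono_left nhdsWithin_le_nhds⟩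
  intro x _ l _ hxy
  refine sum_weighted_aStar_le_mul_WStar hmono hscale _ fun m hm ↦ hxy.trans ?_
  exact zpow_le_zpow_right₀ one_le_two (by linarith [(Finset.mem_Icc.mp hm).2])

theorem blowup_of_WStar_infinite (N : ℕ) (c : ℝ≥0∞) (α : ℝ)
    (hc : 0 < c) (hcfin : c ≠ ∞) (hα : 0 < α)
    (K : Set (EuclideanSpace ℝ (Fin N)) → ℝ≥0∞)
    (hmono : Monotone K)
    (hsub : ∀ A B : Set (EuclideanSpace ℝ (Fin N)), K (A ∪ B) ≤ K A + K B)
    (hscale : ∀ (A : Set (EuclideanSpace ℝ (Fin N))) (μ : ℝ), 1 ≤ μ → μ ≤ 2 →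
      K ((μ • A : Set (EuclideanSpace ℝ (Fin N)))) ≤ c * K A)
    (F : Set (EuclideanSpace ℝ (Fin N))) (hF : IsClosed F)
    (y : EuclideanSpace ℝ (Fin N)) (hy : y ∈ frontier Fᶜ)
    (hWy : WStar K α F y = ∞) :
    ∃ c' : ℝ≥0∞, 0 < c' ∧ c' ≠ ∞ ∧
      (∀ (x : EuclideanSpace ℝ (Fin N)), x ∉ F → ∀ l : ℤ,
        (2 : ℝ) ^ (-l) ≤ dist x y → dist x y ≤ (2 : ℝ) ^ (-l + 1) →
        ∑ m ∈ Finset.Icc (1 : ℤ) l, (2 : ℝ≥0∞) ^ (α * (m : ℝ)) * aStar K F y m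
          ≤ c' * WStar K α F x) ∧
      Tendsto (WStar K α F) (nhdsWithin y Fᶜ) (nhds ∞) :=
  blowup_of_WStar_infinite_general N c α hc hcfin K hmono hscale F y hWy
end

section
/- Let u be a positive C² solution of Δu = u^q on an open set D ⊆ ℝᴺ, with q > 1. Then for every x ∈ D, u(x) ≤ C · d(x, ∂D)^{−2/(q−1)}, where C = C(N,q) depends only on N and q (Keller–Osserman estimate). In particular, any solution u on D satisfies u(x) ≤ C·ρ(x)^{−2/(q−1)} where ρ(x) = dist(x, Dᶜ). -/
/-- The Laplacian of `u : ℝᴺ → ℝ`, as the trace of the second derivative. -/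
noncomputable def laplacian {N : ℕ} (u : EuclideanSpace ℝ (Fin N) → ℝ)
    (x : EuclideanSpace ℝ (Fin N)) : ℝ :=
  ∑ i : Fin N, iteratedFDeriv ℝ 2 u x
    ![EuclideanSpace.single i (1 : ℝ), EuclideanSpace.single i (1 : ℝ)]

/-!
Fix `x ∈ D`, let `R = dist(x, Dᶜ) / 2`, `α = 2 / (q - 1)`, and maximise
`w = u · (R² - ‖· - x‖²)^α` over the closed ball `B(x, R)`. The weight vanishes on the sphere,
so the maximum is attained at an interior point `y`. There the first- and second-order
conditions along the coordinate lines, summed, bound `Δu(y) = u(y)^q` by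
`u(y) · K R² / (R² - ‖y - x‖²)²` with `K = K(N, q)`. Since `α (q - 1) = 2`, this says
`w(y) ≤ K^{1/(q-1)} R^α`, and `w(x) ≤ w(y)` is the estimate.
-/

open Filter Topology Metric

theorem IsLocalMax.deriv_deriv_nonpos {f : ℝ → ℝ} {a : ℝ} (hmax : IsLocalMax f a)
    (hf : ContinuousAt f a) : deriv (deriv f) a ≤ 0 := by
  by_contra! hpos
  have hmin := isLocalMin_of_deriv_deriv_pos hpos hmax.deriv_eq_zero hf
  have hconst : f =ᶠ[𝓝 a] fun _ => f a := by
    filter_upwards [hmax, hmin] with x hle hge using le_antisymm hle hge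
  have hzero : deriv (deriv f) a = 0 := by simpa using hconst.deriv.deriv_eq
  exact hpos.ne' hzero

theorem IsLocalMax.secondDeriv_mul_sq_le {f h f' h' : ℝ → ℝ} {f'' h'' a : ℝ}
    (hmax : IsLocalMax (fun t => f t * h t) a)
    (hf : ∀ᶠ t in 𝓝 a, HasDerivAt f (f' t) t) (hf' : HasDerivAt f' f'' a)
    (hh : ∀ᶠ t in 𝓝 a, HasDerivAt h (h' t) t) (hh' : HasDerivAt h' h'' a)
    (hpos : 0 < h a) :
    f'' * h a ^ 2 ≤ f a * (2 * h' a ^ 2 - h a * h'') := by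
  have hderiv : ∀ᶠ t in 𝓝 a, HasDerivAt (fun t => f t * h t) (f' t * h t + f t * h' t) t := by
    filter_upwards [hf, hh] with t hft hht using hft.mul hht
  have hcrit : f' a * h a + f a * h' a = 0 := hmax.hasDerivAt_eq_zero hderiv.self_of_nhds
  have hsecond : f'' * h a + f' a * h' a + (f' a * h' a + f a * h'') ≤ 0 := by
    have hg' := (hf'.mul hh.self_of_nhds).add (hf.self_of_nhds.mul hh')
    have hdg : deriv (fun t => f t * h t) =ᶠ[𝓝 a] fun t => f' t * h t + f t * h' t :=
      hderiv.mono fun _ ht => ht.deriv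
    have hdd := hdg.deriv_eq.trans hg'.deriv
    exact hdd ▸ hmax.deriv_deriv_nonpos hderiv.self_of_nhds.continuousAt
  linear_combination h a * hsecond - 2 * h' a * hcrit

theorem IsLocalMax.secondDeriv_mul_rpow_sq_le {f M f' M' : ℝ → ℝ} {f'' M'' a α : ℝ}
    (hmax : IsLocalMax (fun t => f t * M t ^ α) a)
    (hf : ∀ᶠ t in 𝓝 a, HasDerivAt f (f' t) t) (hf' : HasDerivAt f' f'' a)
    (hM : ∀ᶠ t in 𝓝 a, HasDerivAt M (M' t) t) (hM' : HasDerivAt M' M'' a)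
    (hpos : 0 < M a) :
    f'' * M a ^ 2 ≤ f a * (α * (α + 1) * M' a ^ 2 - α * M a * M'') := by
  have hMpos : ∀ᶠ t in 𝓝 a, 0 < M t :=
    hM.self_of_nhds.continuousAt.eventually (lt_mem_nhds hpos)
  have hh : ∀ᶠ t in 𝓝 a, HasDerivAt (fun t => M t ^ α) (M' t * α * M t ^ (α - 1)) t := by
    filter_upwards [hM, hMpos] with t hMt hpt using hMt.rpow_const (Or.inl hpt.ne')
  have hh' := (hM'.mul_const α).mul (hM.self_of_nhds.rpow_const (p := α - 1) (Or.inl hpos.ne'))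
  have key := hmax.secondDeriv_mul_sq_le hf hf' hh hh' (Real.rpow_pos_of_pos hpos α)
  set P := M a ^ (α - 2)
  have hpow : ∀ (β : ℝ) (n : ℕ), β = α - 2 + n → M a ^ β = P * M a ^ n := by
    rintro β n rfl
    rw [Real.rpow_add hpos, Real.rpow_natCast]
  rw [hpow α 2 (by push_cast; ring), hpow (α - 1) 1 (by push_cast; ring),
    hpow (α - 1 - 1) 0 (by push_cast; ring)] at key
  have hP : 0 < P ^ 2 * M a ^ 2 := by positivity
  refine le_of_mul_le_mul_right ?_ hP
  linear_combination key

section Line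

variable {E F : Type*} [NormedAddCommGroup E] [NormedSpace ℝ E] [NormedAddCommGroup F]
  [NormedSpace ℝ F] {u : E → F} {y : E}

theorem DifferentiableAt.hasDerivAt_comp_add_smul {t : ℝ} (v : E)
    (hu : DifferentiableAt ℝ u (y + t • v)) :
    HasDerivAt (fun s : ℝ => u (y + s • v)) (fderiv ℝ u (y + t • v) v) t :=
  hu.hasFDerivAt.comp_hasDerivAt t <| by
    simpa using ((hasDerivAt_id t).smul_const v).const_add y

theorem ContDiffAt.eventually_hasDerivAt_comp_add_smul (hu : ContDiffAt ℝ 2 u y) (v : E) :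
    ∀ᶠ t in 𝓝 (0 : ℝ), HasDerivAt (fun s : ℝ => u (y + s • v)) (fderiv ℝ u (y + t • v) v) t := by
  have hline : Tendsto (fun t : ℝ => y + t • v) (𝓝 0) (𝓝 y) :=
    (by fun_prop : Continuous fun t : ℝ => y + t • v).tendsto' 0 y (by simp)
  filter_upwards [hline.eventually (hu.eventually (by simp))] with t ht
  exact (ht.differentiableAt two_ne_zero).hasDerivAt_comp_add_smul v

theorem ContDiffAt.hasDerivAt_fderiv_comp_add_smul (hu : ContDiffAt ℝ 2 u y) (v : E) :
    HasDerivAt (fun t : ℝ => fderiv ℝ u (y + t • v) v) (fderiv ℝ (fderiv ℝ u) y v v) 0 := by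
  have hu' : DifferentiableAt ℝ (fderiv ℝ u) (y + (0 : ℝ) • v) := by
    simpa using (hu.fderiv_right (m := 1) le_rfl).differentiableAt one_ne_zero
  simpa using (hu'.hasDerivAt_comp_add_smul v).clm_apply (hasDerivAt_const 0 v)

end Line

open scoped RealInnerProductSpace

theorem IsLocalMax.fderiv_fderiv_mul_sq_le {E : Type*} [NormedAddCommGroup E]
    [InnerProductSpace ℝ E] {u : E → ℝ} {x y : E} {r α : ℝ}
    (hmax : IsLocalMax (fun z => u z * (r - ‖z - x‖ ^ 2) ^ α) y) (hu : ContDiffAt ℝ 2 u y)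
    (hy : ‖y - x‖ ^ 2 < r) (v : E) :
    fderiv ℝ (fderiv ℝ u) y v v * (r - ‖y - x‖ ^ 2) ^ 2 ≤
      u y * (4 * α * (α + 1) * ⟪y - x, v⟫ ^ 2 + 2 * α * (r - ‖y - x‖ ^ 2) * ‖v‖ ^ 2) := by
  have hline : IsLocalMax (fun t : ℝ => u (y + t • v) * (r - ‖y + t • v - x‖ ^ 2) ^ α) 0 := by
    have hmax0 : IsLocalMax (fun z => u z * (r - ‖z - x‖ ^ 2) ^ α) (y + (0 : ℝ) • v) := by
      simpa using hmax
    exact hmax0.comp_continuous (g := fun t : ℝ => y + t • v) (by fun_prop)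
  have hγ : ∀ t : ℝ, HasDerivAt (fun t : ℝ => y + t • v - x) v t := fun t => by
    simpa using (((hasDerivAt_id t).smul_const v).const_add y).sub_const x
  have hM : ∀ᶠ t in 𝓝 (0 : ℝ), HasDerivAt (fun t : ℝ => r - ‖y + t • v - x‖ ^ 2)
      (-(2 * ⟪y + t • v - x, v⟫)) t :=
    Eventually.of_forall fun t => (hγ t).norm_sq.const_sub r
  have hM' := (((hγ 0).inner ℝ (hasDerivAt_const (0 : ℝ) v)).const_mul 2).neg
  have key := hline.secondDeriv_mul_rpow_sq_le (hu.eventually_hasDerivAt_comp_add_smul v)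
    (hu.hasDerivAt_fderiv_comp_add_smul v) hM hM' (by simpa using hy)
  simp only [zero_smul, add_zero, inner_zero_right, zero_add, real_inner_self_eq_norm_sq] at key
  linear_combination key

theorem IsLocalMax.laplacian_mul_sq_le {N : ℕ} {u : EuclideanSpace ℝ (Fin N) → ℝ}
    {x y : EuclideanSpace ℝ (Fin N)} {r α : ℝ}
    (hmax : IsLocalMax (fun z => u z * (r - ‖z - x‖ ^ 2) ^ α) y) (hu : ContDiffAt ℝ 2 u y)
    (hy : ‖y - x‖ ^ 2 < r) :
    laplacian u y * (r - ‖y - x‖ ^ 2) ^ 2 ≤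
      u y * (4 * α * (α + 1) * ‖y - x‖ ^ 2 + 2 * N * α * (r - ‖y - x‖ ^ 2)) := by
  have hsum := Finset.sum_le_sum fun i (_ : i ∈ Finset.univ) =>
    hmax.fderiv_fderiv_mul_sq_le hu hy (EuclideanSpace.single i 1)
  refine le_of_eq_of_le ?_ (hsum.trans_eq ?_)
  · simp [laplacian, iteratedFDeriv_two_apply, Finset.sum_mul]
  · have hcoord : ∑ i, ⟪y - x, EuclideanSpace.single i 1⟫ ^ 2 = ‖y - x‖ ^ 2 := by
      simp [EuclideanSpace.inner_single_right, EuclideanSpace.real_norm_sq_eq]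
    rw [← Finset.mul_sum, Finset.sum_add_distrib, ← Finset.mul_sum, hcoord]
    simp only [PiLp.norm_single, norm_one, one_pow, mul_one, Finset.sum_const, Finset.card_univ,
      Fintype.card_fin, nsmul_eq_mul]
    ring

theorem exists_isLocalMax_mem_ball {X : Type*} [PseudoMetricSpace X] [ProperSpace X]
    {w : X → ℝ} {x : X} {R : ℝ} (hR : 0 < R) (hw : ContinuousOn w (closedBall x R))
    (hsphere : ∀ y ∈ sphere x R, w y ≤ w x) :
    ∃ y ∈ ball x R, IsLocalMax w y ∧ w x ≤ w y := by
  have hloc : ∀ z ∈ ball x R, IsMaxOn w (closedBall x R) z → IsLocalMax w z := fun z hz hmax =>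
    hmax.isLocalMax (mem_of_superset (isOpen_ball.mem_nhds hz) ball_subset_closedBall)
  obtain ⟨y, hy, hmax⟩ := (isCompact_closedBall x R).exists_isMaxOn
    (nonempty_closedBall.2 hR.le) hw
  by_cases hyR : y ∈ ball x R
  · exact ⟨y, hyR, hloc y hyR hmax, hmax (mem_closedBall_self hR.le)⟩
  · have hys : y ∈ sphere x R := le_antisymm (mem_closedBall.1 hy) (not_lt.1 hyR)
    have hxmax : IsMaxOn w (closedBall x R) x := fun z hz => (hmax hz).trans (hsphere y hys)
    exact ⟨x, mem_ball_self hR, hloc x (mem_ball_self hR) hxmax, le_rfl⟩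

theorem le_div_rpow_of_rpow_mul_sq_le {q K r m u₀ uₓ : ℝ} (hq : 1 < q) (hu₀ : 0 < u₀)
    (hm : 0 < m) (hr : 0 < r) (hK : 0 ≤ K) (hpde : u₀ ^ q * m ^ 2 ≤ u₀ * (K * r))
    (hmax : uₓ * r ^ (2 / (q - 1)) ≤ u₀ * m ^ (2 / (q - 1))) :
    uₓ ≤ (K / r) ^ (q - 1)⁻¹ := by
  have hq₁ : 0 < q - 1 := sub_pos.2 hq
  set e := (q - 1)⁻¹
  have h2e : 2 / (q - 1) = e + e := by ring
  have hpde' : u₀ ^ (q - 1) * m ^ 2 ≤ K * r := by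
    rw [Real.rpow_sub_one hu₀.ne', div_mul_eq_mul_div, div_le_iff₀ hu₀]
    linarith
  have hroot : u₀ * m ^ (2 / (q - 1)) ≤ K ^ e * r ^ e := by
    calc u₀ * m ^ (2 / (q - 1)) = (u₀ ^ (q - 1) * m ^ 2) ^ e := by
          rw [Real.mul_rpow (by positivity) (by positivity), ← Real.rpow_mul hu₀.le,
            ← Real.rpow_natCast, ← Real.rpow_mul hm.le, mul_inv_cancel₀ hq₁.ne', Real.rpow_one]
          norm_num [e, div_eq_mul_inv]
      _ ≤ (K * r) ^ e := Real.rpow_le_rpow (by positivity) hpde' (by positivity)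
      _ = K ^ e * r ^ e := Real.mul_rpow hK hr.le
  have hbound := hmax.trans hroot
  rw [h2e, Real.rpow_add hr] at hbound
  rw [Real.div_rpow hK hr.le, le_div_iff₀ (by positivity)]
  refine le_of_mul_le_mul_right ?_ (Real.rpow_pos_of_pos hr e)
  linarith

noncomputable def kellerOssermanConst (N : ℕ) (q : ℝ) : ℝ :=
  4 * (2 / (q - 1)) * (2 / (q - 1) + 1) + 2 * N * (2 / (q - 1))

theorem le_kellerOssermanConst_div_sq_rpow {N : ℕ} {q : ℝ} (hq : 1 < q)
    {D : Set (EuclideanSpace ℝ (Fin N))} (hD : IsOpen D) {u : EuclideanSpace ℝ (Fin N) → ℝ}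
    (hu : ContDiffOn ℝ 2 u D) (hpos : ∀ x ∈ D, 0 < u x)
    (hlap : ∀ x ∈ D, laplacian u x = u x ^ q) {x : EuclideanSpace ℝ (Fin N)} {R : ℝ}
    (hR : 0 < R) (hball : closedBall x R ⊆ D) :
    u x ≤ (kellerOssermanConst N q / R ^ 2) ^ (q - 1)⁻¹ := by
  have hα : 0 < 2 / (q - 1) := div_pos two_pos (sub_pos.2 hq)
  set α := 2 / (q - 1)
  rw [show kellerOssermanConst N q = 4 * α * (α + 1) + 2 * N * α from rfl]
  set w := fun y => u y * (R ^ 2 - ‖y - x‖ ^ 2) ^ α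
  have hx : x ∈ D := hball (mem_closedBall_self hR.le)
  have hwx : w x = u x * (R ^ 2) ^ α := by simp [w]
  have hw : ContinuousOn w (closedBall x R) :=
    (hu.continuousOn.mono hball).mul
      ((by fun_prop : Continuous fun y => R ^ 2 - ‖y - x‖ ^ 2).rpow_const
        fun _ => Or.inr hα.le).continuousOn
  have hsphere : ∀ y ∈ sphere x R, w y ≤ w x := fun y hy => by
    rw [mem_sphere_iff_norm] at hy
    simp only [w, hy, sub_self, Real.zero_rpow hα.ne', mul_zero, hwx]
    exact (mul_pos (hpos x hx) (by positivity)).le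
  obtain ⟨y, hyR, hmax, hwy⟩ := exists_isLocalMax_mem_ball hR hw hsphere
  have hyD : y ∈ D := hball (ball_subset_closedBall hyR)
  have hyx : ‖y - x‖ ^ 2 < R ^ 2 := by
    rw [mem_ball_iff_norm] at hyR
    gcongr
  have hpde := hmax.laplacian_mul_sq_le (hu.contDiffAt (hD.mem_nhds hyD)) hyx
  rw [hlap y hyD] at hpde
  have hweight : 4 * α * (α + 1) * ‖y - x‖ ^ 2 + 2 * N * α * (R ^ 2 - ‖y - x‖ ^ 2) ≤
      (4 * α * (α + 1) + 2 * N * α) * R ^ 2 := by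
    nlinarith [mul_nonneg (by positivity : (0 : ℝ) ≤ 4 * α * (α + 1)) (sub_nonneg.2 hyx.le),
      mul_nonneg (by positivity : (0 : ℝ) ≤ 2 * N * α) (sq_nonneg ‖y - x‖)]
  exact le_div_rpow_of_rpow_mul_sq_le hq (hpos y hyD) (sub_pos.2 hyx) (by positivity)
    (by positivity)
    (hpde.trans (mul_le_mul_of_nonneg_left hweight (hpos y hyD).le)) (hwx ▸ hwy)

theorem keller_osserman_general (N : ℕ) (q : ℝ) (hq : 1 < q) :
    ∃ C : ℝ, 0 < C ∧
      ∀ (D : Set (EuclideanSpace ℝ (Fin N))), IsOpen D → Dᶜ.Nonempty →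
      ∀ u : EuclideanSpace ℝ (Fin N) → ℝ,
        ContDiffOn ℝ 2 u D →
        (∀ x ∈ D, 0 < u x) →
        (∀ x ∈ D, laplacian u x = u x ^ q) →
        ∀ x ∈ D, u x ≤ C * Metric.infDist x Dᶜ ^ (-2 / (q - 1)) := by
  set K := kellerOssermanConst N q
  have hK : 0 < K := by
    have : 0 < 2 / (q - 1) := div_pos two_pos (sub_pos.2 hq)
    unfold K kellerOssermanConst
    positivity
  refine ⟨(4 * K) ^ (q - 1)⁻¹, by positivity, ?_⟩
  intro D hD hDc u hu hpos hlap x hx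
  set ρ := infDist x Dᶜ
  have hρ : 0 < ρ := (hD.isClosed_compl.notMem_iff_infDist_pos hDc).1 (not_not_intro hx)
  have hball : closedBall x (ρ / 2) ⊆ D :=
    (closedBall_subset_ball (half_lt_self hρ)).trans ball_infDist_compl_subset
  calc u x ≤ (K / (ρ / 2) ^ 2) ^ (q - 1)⁻¹ :=
        le_kellerOssermanConst_div_sq_rpow hq hD hu hpos hlap (half_pos hρ) hball
    _ = (4 * K) ^ (q - 1)⁻¹ * ρ ^ (-2 / (q - 1)) := by
      rw [show K / (ρ / 2) ^ 2 = 4 * K * (ρ ^ 2)⁻¹ by field_simp; ring,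
        Real.mul_rpow (by positivity) (by positivity), Real.inv_rpow (by positivity),
        ← Real.rpow_natCast, ← Real.rpow_mul hρ.le, ← Real.rpow_neg hρ.le]
      norm_num [div_eq_mul_inv]

/-- Keller–Osserman estimate: every positive C² solution of `Δu = u^q`, `q > 1`, on an
open set `D` satisfies `u(x) ≤ C(N,q) · dist(x, Dᶜ)^{−2/(q−1)}`. -/
theorem keller_osserman (N : ℕ) (hN : 1 ≤ N) (q : ℝ) (hq : 1 < q) :
    ∃ C : ℝ, 0 < C ∧
      ∀ (D : Set (EuclideanSpace ℝ (Fin N))), IsOpen D → Dᶜ.Nonempty →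
      ∀ u : EuclideanSpace ℝ (Fin N) → ℝ,
        ContDiffOn ℝ 2 u D →
        (∀ x ∈ D, 0 < u x) →
        (∀ x ∈ D, laplacian u x = u x ^ q) →
        ∀ x ∈ D, u x ≤ C * Metric.infDist x Dᶜ ^ (-2 / (q - 1)) :=
  keller_osserman_general N q hq
end
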